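/- arXiv:1801.07863 — 3 statements merged into one kernel-verified Lean document; each statement's English description precedes it below -/
import Mathlib

section
/- Let G be a finite simple undirected graph on n vertices in which every vertex has degree at least 1, with random-walk matrix P, let s ∈ [0,1]^n, and let ℓ, u be reals with 0 < ℓ ≤ u ≤ 1. For α ∈ [ℓ,u]^n write A = diag(α) and f(s,α) = 1ᵀ (I − (I−A)P)⁻¹ A s (the total sum of equilibrium opinions). Then there exists a vector α* ∈ [ℓ,u]^n with α*_i ∈ {ℓ, u} for every i such that f(s,α*) ≥ f(s,α) for every α ∈ [ℓ,u]^n; that is, the opinion maximization problem always has an optimal solution in which every resistance parameter takes one of the two extreme values ℓ or u. -/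
open Matrix BigOperators

/-- The random-walk matrix of a graph: `P i j = 1 / deg i` if `(i,j)` is an edge, else `0`. -/
noncomputable def rwMatrix {n : ℕ} (G : SimpleGraph (Fin n)) [DecidableRel G.Adj] :
    Matrix (Fin n) (Fin n) ℝ :=
  fun i j => if G.Adj i j then (1 : ℝ) / (G.degree i) else 0

/-- The total sum of equilibrium opinions `f(s,α) = 1ᵀ (I − (I−A)P)⁻¹ A s`,
where `A = diag α`. -/
noncomputable def totalOpinion {n : ℕ} (G : SimpleGraph (Fin n)) [DecidableRel G.Adj]
    (s α : Fin n → ℝ) : ℝ :=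
  ∑ i, (((1 - (1 - Matrix.diagonal α) * rwMatrix G)⁻¹ *ᵥ (Matrix.diagonal α *ᵥ s)) i)

/-!
Fix every resistance except `α i`. Since `α i` only enters row `i` of `M = I - (I - A)P` and of
`M - A s 1ᵀ`, both determinants are affine in `α i`, and by the matrix determinant lemma
`1ᵀ M⁻¹ A s = (det M - det (M - A s 1ᵀ)) / det M`. So `f` is a linear-fractional function of `α i`
whose denominator `det M` never vanishes on `[ℓ, u]` (`M` is strictly diagonally dominant); such a
function is monotone on the interval, and moving `α i` to `ℓ` or to `u` does not decrease `f`.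
Doing this coordinate by coordinate, every `α ∈ [ℓ, u]ⁿ` is dominated by a vertex of the box, and
the best of the finitely many vertices is optimal.
-/

namespace Matrix
variable {ι : Type*} [DecidableEq ι]

theorem diagonal_update_eq_add_smul {R : Type*} [Semiring R] (α : ι → R) (i : ι) (t : R) :
    diagonal (Function.update α i t) =
      diagonal (Function.update α i 0) + t • diagonal (Pi.single i 1) := by
  have : Function.update α i t = Function.update α i 0 + t • Pi.single i 1 := by
    ext k
    by_cases hk : k = i
    · subst hk; simp
    · simp [hk]
  rw [this, ← diagonal_smul]
  exact (diagonal_add _ _).symm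

variable [Fintype ι]

theorem det_add_smul_of_forall_ne_eq_zero {R : Type*} [CommRing R] (A B : Matrix ι ι R) (i : ι)
    (hB : ∀ k ≠ i, B k = 0) (t : R) :
    (A + t • B).det = A.det + t * (A.updateRow i (B i)).det := by
  have hrow : A + t • B = A.updateRow i (A i + t • B i) := by
    ext k j
    by_cases hk : k = i
    · subst hk; simp
    · simp [hk, hB k hk]
  rw [hrow, det_updateRow_add, det_updateRow_smul, updateRow_eq_self]

theorem diagonal_single_one_mul_of_ne {R : Type*} [Semiring R] {i k : ι} (hk : k ≠ i)
    (B : Matrix ι ι R) : (diagonal (Pi.single i (1 : R)) * B) k = 0 := by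
  ext j
  simp [diagonal_mul, hk]

-- Also true for singular `M`: there `M⁻¹ = 0` and `x / 0 = 0` make both sides vanish.
theorem sum_inv_mulVec_eq_div {K : Type*} [Field K] (M : Matrix ι ι K) (b : ι → K) :
    ∑ i, (M⁻¹ *ᵥ b) i = (M.det - (M - vecMulVec b 1).det) / M.det := by
  by_cases hM : M.det = 0
  · simp [hM, nonsing_inv_apply_not_isUnit M (by simpa using hM)]
  have key := det_add_replicateCol_mul_replicateRow (ι := Unit) (isUnit_iff_ne_zero.mpr hM) (-b) 1
  rw [← vecMulVec_eq, Matrix.mul_assoc, ← replicateCol_mulVec, det_unique (1 + _),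
    add_apply, replicateRow_mul_replicateCol_apply, one_apply_eq] at key
  have hneg : M + vecMulVec (-b) 1 = M - vecMulVec b 1 := by
    rw [sub_eq_add_neg, neg_vecMulVec]
  rw [hneg, mulVec_neg, dotProduct_neg, one_dotProduct] at key
  rw [key]
  field_simp
  ring

end Matrix

theorem div_le_max_of_forall_ne_zero {a b c d ℓ u t : ℝ}
    (hD : ∀ x ∈ Set.Icc ℓ u, c + d * x ≠ 0) (ht : t ∈ Set.Icc ℓ u) :
    (a + b * t) / (c + d * t) ≤ max ((a + b * ℓ) / (c + d * ℓ)) ((a + b * u) / (c + d * u)) := by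
  have hℓ : ℓ ∈ Set.Icc ℓ u := Set.left_mem_Icc.2 (ht.1.trans ht.2)
  have hu : u ∈ Set.Icc ℓ u := Set.right_mem_Icc.2 (ht.1.trans ht.2)
  have hsign : ∀ x ∈ Set.Icc ℓ u, 0 < (c + d * x) * (c + d * t) := by
    rcases isPreconnected_Icc.mapsTo_Ioi_or_Iio (by fun_prop) hD with hpos | hneg
    · exact fun x hx => mul_pos (hpos hx) (hpos ht)
    · exact fun x hx => mul_pos_of_neg_of_neg (hneg hx) (hneg ht)
  have hsub : ∀ x ∈ Set.Icc ℓ u, (a + b * x) / (c + d * x) - (a + b * t) / (c + d * t) =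
      (b * c - a * d) * (x - t) / ((c + d * x) * (c + d * t)) := by
    intro x hx
    rw [div_sub_div _ _ (hD x hx) (hD t ht)]
    ring
  rcases le_total 0 (b * c - a * d) with hbc | hbc
  · refine le_max_of_le_right (sub_nonneg.1 ?_)
    rw [hsub u hu]
    exact div_nonneg (mul_nonneg hbc (sub_nonneg.2 ht.2)) (hsign u hu).le
  · refine le_max_of_le_left (sub_nonneg.1 ?_)
    rw [hsub ℓ hℓ]
    exact div_nonneg (mul_nonneg_of_nonpos_of_nonpos hbc (sub_nonpos.2 ht.1)) (hsign ℓ hℓ).le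

theorem exists_le_of_forall_exists_update_le {ι β γ : Type*} [Fintype ι] [DecidableEq ι]
    [Preorder γ] {K E : Set β} (hEK : E ⊆ K) {F : (ι → β) → γ}
    (hF : ∀ x, (∀ i, x i ∈ K) → ∀ i, ∃ e ∈ E, F x ≤ F (Function.update x i e))
    (x : ι → β) (hx : ∀ i, x i ∈ K) : ∃ y, (∀ i, y i ∈ E) ∧ F x ≤ F y := by
  suffices h : ∀ S : Finset ι, ∀ x, (∀ i, x i ∈ K) → (∀ i ∉ S, x i ∈ E) →
      ∃ y, (∀ i, y i ∈ E) ∧ F x ≤ F y from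
    h Finset.univ x hx fun i hi => absurd (Finset.mem_univ i) hi
  intro S
  induction S using Finset.induction_on with
  | empty => exact fun x _ hE => ⟨x, fun i => hE i (Finset.notMem_empty i), le_rfl⟩
  | insert i S _ ih =>
    intro x hK hE
    obtain ⟨e, he, hle⟩ := hF x hK i
    have hK' : ∀ j, Function.update x i e j ∈ K :=
      (Function.forall_update_iff x fun _ b => b ∈ K).2 ⟨hEK he, fun j _ => hK j⟩
    have hE' : ∀ j ∉ S, Function.update x i e j ∈ E := by
      intro j hj
      rcases eq_or_ne j i with rfl | hji
      · simpa using he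
      · rw [Function.update_of_ne hji]
        exact hE j (by simp [hji, hj])
    obtain ⟨y, hy, hxy⟩ := ih _ hK' hE'
    exact ⟨y, hy, hle.trans hxy⟩

section Opinion
variable {ι : Type*} [Fintype ι] [DecidableEq ι]

noncomputable def opinionSum (P : Matrix ι ι ℝ) (s α : ι → ℝ) : ℝ :=
  ∑ i, ((1 - (1 - diagonal α) * P)⁻¹ *ᵥ (diagonal α *ᵥ s)) i

theorem det_one_sub_mul_ne_zero {P : Matrix ι ι ℝ} (hP₀ : ∀ i j, 0 ≤ P i j)
    (hP₁ : ∀ i, ∑ j, P i j ≤ 1) {α : ι → ℝ} (hα₀ : ∀ i, 0 < α i) (hα₁ : ∀ i, α i ≤ 1) :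
    (1 - (1 - diagonal α) * P).det ≠ 0 := by
  refine det_ne_zero_of_sum_row_lt_diag fun k => ?_
  have hentry : ∀ j,
      (1 - (1 - diagonal α) * P) k j = (1 : Matrix ι ι ℝ) k j - (1 - α k) * P k j := by
    intro j
    simp only [Matrix.sub_mul, one_mul, Matrix.sub_apply, diagonal_mul, sub_right_inj]
    ring
  calc ∑ j ∈ Finset.univ.erase k, ‖(1 - (1 - diagonal α) * P) k j‖
      = (1 - α k) * ∑ j ∈ Finset.univ.erase k, P k j := by
        rw [Finset.mul_sum]
        refine Finset.sum_congr rfl fun j hj => ?_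
        rw [hentry, one_apply_ne (Finset.ne_of_mem_erase hj).symm, zero_sub, norm_neg,
          Real.norm_eq_abs, abs_of_nonneg (mul_nonneg (by linarith [hα₁ k]) (hP₀ k j))]
    _ = (1 - α k) * (∑ j, P k j - P k k) := by rw [Finset.sum_erase_eq_sub (Finset.mem_univ k)]
    _ < 1 - (1 - α k) * P k k := by nlinarith [hα₀ k, hα₁ k, hP₁ k]
    _ ≤ ‖(1 - (1 - diagonal α) * P) k k‖ := by
        rw [hentry, one_apply_eq, Real.norm_eq_abs]
        exact le_abs_self _

theorem opinionSum_eq_div (P : Matrix ι ι ℝ) (s α : ι → ℝ) :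
    opinionSum P s α = ((1 - (1 - diagonal α) * P).det
      - (1 - (1 - diagonal α) * P - diagonal α * vecMulVec s 1).det)
      / (1 - (1 - diagonal α) * P).det := by
  rw [opinionSum, sum_inv_mulVec_eq_div, mul_vecMulVec]

theorem exists_opinionSum_update_eq_div (P : Matrix ι ι ℝ) (s α : ι → ℝ) (i : ι) :
    ∃ a b c d : ℝ, ∀ t, (1 - (1 - diagonal (Function.update α i t)) * P).det = c + d * t ∧
      opinionSum P s (Function.update α i t) = (a + b * t) / (c + d * t) := by
  set D₀ := diagonal (Function.update α i 0)
  set E : Matrix ι ι ℝ := diagonal (Pi.single i 1)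
  set S := vecMulVec s (1 : ι → ℝ)
  set M₀ := 1 - (1 - D₀) * P
  set K₀ := M₀ - D₀ * S
  have hM : ∀ t, 1 - (1 - diagonal (Function.update α i t)) * P = M₀ + t • (E * P) := by
    intro t
    rw [diagonal_update_eq_add_smul]
    simp only [M₀, Matrix.sub_mul, Matrix.add_mul, Matrix.smul_mul]
    abel
  have hK : ∀ t, 1 - (1 - diagonal (Function.update α i t)) * P
      - diagonal (Function.update α i t) * S = K₀ + t • (E * (P - S)) := by
    intro t
    rw [hM, diagonal_update_eq_add_smul]
    simp only [K₀, Matrix.mul_sub, Matrix.add_mul, Matrix.smul_mul, smul_sub]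
    abel
  have hrow : ∀ B : Matrix ι ι ℝ, ∀ k ≠ i, (E * B) k = 0 :=
    fun B k hk => diagonal_single_one_mul_of_ne hk B
  set dM := (M₀.updateRow i ((E * P) i)).det
  set dK := (K₀.updateRow i ((E * (P - S)) i)).det
  refine ⟨M₀.det - K₀.det, dM - dK, M₀.det, dM, fun t => ?_⟩
  have hdetM := det_add_smul_of_forall_ne_eq_zero M₀ (E * P) i (hrow P) t
  have hdetK := det_add_smul_of_forall_ne_eq_zero K₀ (E * (P - S)) i (hrow (P - S)) t
  refine ⟨by rw [hM, hdetM]; ring, ?_⟩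
  rw [opinionSum_eq_div, hK, hM, hdetM, hdetK]
  ring

theorem exists_opinionSum_le_update {P : Matrix ι ι ℝ} (hP₀ : ∀ i j, 0 ≤ P i j)
    (hP₁ : ∀ i, ∑ j, P i j ≤ 1) (s : ι → ℝ) {ℓ u : ℝ} (hℓ : 0 < ℓ) (hu : u ≤ 1)
    {α : ι → ℝ} (hα : ∀ j, α j ∈ Set.Icc ℓ u) (i : ι) :
    ∃ e ∈ ({ℓ, u} : Set ℝ), opinionSum P s α ≤ opinionSum P s (Function.update α i e) := by
  obtain ⟨a, b, c, d, h⟩ := exists_opinionSum_update_eq_div P s α i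
  have hD : ∀ t ∈ Set.Icc ℓ u, c + d * t ≠ 0 := by
    intro t ht
    have hbox : ∀ j, Function.update α i t j ∈ Set.Icc ℓ u :=
      (Function.forall_update_iff α fun _ b => b ∈ Set.Icc ℓ u).2 ⟨ht, fun j _ => hα j⟩
    rw [← (h t).1]
    exact det_one_sub_mul_ne_zero hP₀ hP₁ (fun j => hℓ.trans_le (hbox j).1)
      (fun j => (hbox j).2.trans hu)
  have hmax := div_le_max_of_forall_ne_zero (a := a) (b := b) hD (hα i)
  rw [← (h (α i)).2, Function.update_eq_self, ← (h ℓ).2, ← (h u).2] at hmax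
  rcases le_max_iff.1 hmax with hle | hle
  · exact ⟨ℓ, by simp, hle⟩
  · exact ⟨u, by simp, hle⟩

theorem exists_extreme_forall_opinionSum_le {P : Matrix ι ι ℝ} (hP₀ : ∀ i j, 0 ≤ P i j)
    (hP₁ : ∀ i, ∑ j, P i j ≤ 1) (s : ι → ℝ) {ℓ u : ℝ} (hℓ : 0 < ℓ) (hℓu : ℓ ≤ u) (hu : u ≤ 1) :
    ∃ αstar : ι → ℝ, (∀ i, αstar i = ℓ ∨ αstar i = u) ∧
      ∀ α : ι → ℝ, (∀ i, α i ∈ Set.Icc ℓ u) → opinionSum P s α ≤ opinionSum P s αstar := by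
  classical
  obtain ⟨αstar, hmem, hmax⟩ := (Fintype.piFinset fun _ : ι => ({ℓ, u} : Finset ℝ)).exists_max_image
    (opinionSum P s) (Finset.insert_nonempty ℓ {u}).piFinset_const
  simp only [Fintype.mem_piFinset, Finset.mem_insert, Finset.mem_singleton] at hmem hmax
  refine ⟨αstar, hmem, fun α hα => ?_⟩
  obtain ⟨β, hβ, hαβ⟩ := exists_le_of_forall_exists_update_le (E := {ℓ, u})
    (by simp [Set.insert_subset_iff, hℓu])
    (fun x hx i => exists_opinionSum_le_update hP₀ hP₁ s hℓ hu hx i) α hα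
  exact hαβ.trans (hmax β hβ)

end Opinion

theorem rwMatrix_nonneg {n : ℕ} (G : SimpleGraph (Fin n)) [DecidableRel G.Adj] (i j : Fin n) :
    0 ≤ rwMatrix G i j := by
  unfold rwMatrix
  split_ifs <;> positivity

theorem sum_rwMatrix_le_one {n : ℕ} (G : SimpleGraph (Fin n)) [DecidableRel G.Adj] (i : Fin n) :
    ∑ j, rwMatrix G i j ≤ 1 := by
  simp only [rwMatrix]
  rw [Finset.sum_ite, Finset.sum_const_zero, add_zero, Finset.sum_const,
    ← G.neighborFinset_eq_filter, G.card_neighborFinset_eq_degree, nsmul_eq_mul, mul_one_div]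
  exact div_self_le_one _

theorem opinion_maximization_extreme_values_general
    {n : ℕ} (G : SimpleGraph (Fin n)) [DecidableRel G.Adj]
    (s : Fin n → ℝ)
    (ℓ u : ℝ) (hℓ : 0 < ℓ) (hℓu : ℓ ≤ u) (hu : u ≤ 1) :
    ∃ αstar : Fin n → ℝ, (∀ i, αstar i = ℓ ∨ αstar i = u) ∧
      ∀ α : Fin n → ℝ, (∀ i, α i ∈ Set.Icc ℓ u) →
        totalOpinion G s α ≤ totalOpinion G s αstar :=
  exists_extreme_forall_opinionSum_le (rwMatrix_nonneg G) (sum_rwMatrix_le_one G) s hℓ hℓu hu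

theorem opinion_maximization_extreme_values
    {n : ℕ} (G : SimpleGraph (Fin n)) [DecidableRel G.Adj]
    (hdeg : ∀ v, 0 < G.degree v)
    (s : Fin n → ℝ) (hs : ∀ i, s i ∈ Set.Icc (0 : ℝ) 1)
    (ℓ u : ℝ) (hℓ : 0 < ℓ) (hℓu : ℓ ≤ u) (hu : u ≤ 1) :
    ∃ αstar : Fin n → ℝ, (∀ i, αstar i = ℓ ∨ αstar i = u) ∧
      ∀ α : Fin n → ℝ, (∀ i, α i ∈ Set.Icc ℓ u) →
        totalOpinion G s α ≤ totalOpinion G s αstar :=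
  opinion_maximization_extreme_values_general G s ℓ u hℓ hℓu hu
end

section
/- Let G be a finite simple undirected graph on n vertices in which every vertex has degree at least 1, with random-walk matrix P, and let X be an n×n real diagonal matrix with X_{ii} > 1 for all i. Let R be the invertible diagonal matrix with R_{ii} = sqrt((X_{ii} − 1)/deg(i)). Then R⁻¹ (X − (X−I)P) R is a symmetric matrix; in particular the matrix Z = X − (X−I)P is similar to a symmetric matrix, and all eigenvalues of Z are real. -/
/-!
Writing `X = diag x` and `P = D⁻¹A`, one has `Z = diag x - diag (r ⊙ r) A` with
`rᵢ = √((xᵢ - 1) / deg i)`, because diagonal matrices commute. Conjugating by `R = diag r` turns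
the second term into `diag r · A · diag r`, which is symmetric since `A` is. A real matrix similar
to a real symmetric matrix has the eigenvalues of a Hermitian matrix, hence real ones.
-/

open Matrix BigOperators

namespace Matrix

variable {n : Type*} [Fintype n] [DecidableEq n]

theorem isSymm_diagonal_inv_mul_sub_mul_diagonal {K : Type*} [Field K] {r : n → K}
    (hr : ∀ i, r i ≠ 0) (d : n → K) {A : Matrix n n K} (hA : A.IsSymm) :
    ((diagonal r)⁻¹ * (diagonal d - diagonal (r * r) * A) * diagonal r).IsSymm := by
  have hinv : (diagonal r)⁻¹ = diagonal r⁻¹ := inv_eq_left_inv (by simp [hr])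
  refine IsSymm.ext fun i j => ?_
  simp only [hinv, mul_diagonal, diagonal_mul, sub_apply, diagonal_apply, Pi.inv_apply,
    Pi.mul_apply, hA.apply i j]
  rcases eq_or_ne i j with rfl | hij
  · rfl
  · simp only [if_neg hij, if_neg hij.symm]
    field_simp [hr i, hr j]
    ring

theorem IsHermitian.im_eq_zero_of_mulVec_eq_smul {𝕜 : Type*} [RCLike 𝕜] {A : Matrix n n 𝕜}
    (hA : A.IsHermitian) {μ : 𝕜} {v : n → 𝕜} (hv : v ≠ 0) (h : A *ᵥ v = μ • v) :
    RCLike.im μ = 0 := by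
  have hμ : Module.End.HasEigenvalue A.toEuclideanLin μ :=
    Module.End.hasEigenvalue_of_hasEigenvector (x := WithLp.toLp 2 v)
      ⟨Module.End.mem_eigenspace_iff.mpr <| by
          simpa [toEuclideanLin] using congrArg (WithLp.toLp 2) h,
        by simpa using hv⟩
  exact RCLike.conj_eq_iff_im.mp <|
    (isSymmetric_toEuclideanLin_iff.mpr hA).conj_eigenvalue_eq_self hμ

omit [DecidableEq n] in
theorem mulVec_mulVec_eq_smul_of_mul_eq_mul {R : Type*} [CommSemiring R] {M S Q : Matrix n n R}
    (hSQ : S * Q = Q * M) {μ : R} {v : n → R} (h : M *ᵥ v = μ • v) :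
    S *ᵥ (Q *ᵥ v) = μ • (Q *ᵥ v) := by
  rw [mulVec_mulVec, hSQ, ← mulVec_mulVec, h, mulVec_smul]

theorem im_eq_zero_of_isSymm_inv_mul_mul {A R : Matrix n n ℝ} (hR : IsUnit R.det)
    (hS : (R⁻¹ * A * R).IsSymm) {μ : ℂ} {v : n → ℂ} (hv : v ≠ 0)
    (h : A.map (fun x : ℝ => (x : ℂ)) *ᵥ v = μ • v) : μ.im = 0 := by
  let φ := Complex.ofRealHom.mapMatrix (m := n)
  change φ A *ᵥ v = μ • v at h
  have hRR : R * R⁻¹ = 1 := mul_nonsing_inv R hR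
  have hconj : (R⁻¹ * A * R) * R⁻¹ = R⁻¹ * A := by rw [Matrix.mul_assoc _ R, hRR, Matrix.mul_one]
  have hw : φ R⁻¹ *ᵥ v ≠ 0 := fun h0 => hv <| by
    rw [← one_mulVec v, ← map_one φ, ← hRR, map_mul, ← mulVec_mulVec, h0, mulVec_zero]
  have hherm : (φ (R⁻¹ * A * R)).IsHermitian :=
    (isHermitian_iff_isSymm.mpr hS).map _ fun x => (Complex.conj_ofReal x).symm
  exact hherm.im_eq_zero_of_mulVec_eq_smul hw
    (mulVec_mulVec_eq_smul_of_mul_eq_mul (by rw [← map_mul, ← map_mul, hconj]) h)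

end Matrix

theorem rwMatrix_eq_diagonal_mul_adjMatrix {n : ℕ} (G : SimpleGraph (Fin n)) [DecidableRel G.Adj] :
    rwMatrix G = diagonal (fun i => (G.degree i : ℝ)⁻¹) * G.adjMatrix ℝ := by
  ext i j
  rw [diagonal_mul]
  simp [rwMatrix, SimpleGraph.adjMatrix_apply]

theorem diagonal_sub_one_mul_rwMatrix {n : ℕ} (G : SimpleGraph (Fin n)) [DecidableRel G.Adj]
    (x : Fin n → ℝ) :
    (diagonal x - 1) * rwMatrix G = diagonal (fun i => (x i - 1) / G.degree i) * G.adjMatrix ℝ := by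
  rw [rwMatrix_eq_diagonal_mul_adjMatrix, ← diagonal_one, diagonal_sub, ← Matrix.mul_assoc,
    diagonal_mul_diagonal]
  rfl

theorem similar_to_symmetric_real_eigenvalues
    {n : ℕ} (G : SimpleGraph (Fin n)) [DecidableRel G.Adj]
    (hdeg : ∀ v, 0 < G.degree v)
    (X : Matrix (Fin n) (Fin n) ℝ) (hX : X.IsDiag) (hX1 : ∀ i, 1 < X i i)
    (R : Matrix (Fin n) (Fin n) ℝ)
    (hR : R = Matrix.diagonal (fun i => Real.sqrt ((X i i - 1) / (G.degree i)))) :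
    (R⁻¹ * (X - (X - 1) * rwMatrix G) * R).IsSymm ∧
    ∀ lam : ℂ, (∃ v : Fin n → ℂ, v ≠ 0 ∧
        ((X - (X - 1) * rwMatrix G).map (fun x : ℝ => (x : ℂ))) *ᵥ v = lam • v) →
      lam.im = 0 := by
  set r : Fin n → ℝ := fun i => Real.sqrt ((X i i - 1) / G.degree i)
  have hquot : ∀ i, 0 < (X i i - 1) / G.degree i := fun i =>
    div_pos (sub_pos.mpr (hX1 i)) (Nat.cast_pos.mpr (hdeg i))
  have hr : ∀ i, r i ≠ 0 := fun i => (Real.sqrt_pos.mpr (hquot i)).ne'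
  have hZ : X - (X - 1) * rwMatrix G = diagonal X.diag - diagonal (r * r) * G.adjMatrix ℝ := by
    conv_lhs => rw [← hX.diagonal_diag, diagonal_sub_one_mul_rwMatrix]
    congr 3
    exact funext fun i => (Real.mul_self_sqrt (hquot i).le).symm
  have hsymm : (R⁻¹ * (X - (X - 1) * rwMatrix G) * R).IsSymm := by
    rw [hR, hZ]
    exact isSymm_diagonal_inv_mul_sub_mul_diagonal hr _ G.isSymm_adjMatrix
  have hdet : IsUnit R.det := by
    rw [hR, det_diagonal]
    exact (Finset.prod_ne_zero_iff.mpr fun i _ => hr i).isUnit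
  exact ⟨hsymm, fun lam ⟨v, hv, h⟩ => im_eq_zero_of_isSymm_inv_mul_mul hdet hsymm hv h⟩
end

section
/- Let P be an n×n row-stochastic real matrix (P·1 = 1) and let X be an n×n real diagonal matrix such that Z = X − (X−I)P is invertible. Then for every s ∈ ℝ^n, 1ᵀ Z⁻¹ (1 − s) = n − 1ᵀ Z⁻¹ s. In particular, minimizing 1ᵀ (X − (X−I)P)⁻¹ (1 − s) over X is equivalent to maximizing 1ᵀ (X − (X−I)P)⁻¹ s over X, so the opinion maximization problem reduces to the opinion minimization problem with innate opinions replaced by 1 − s. -/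
open Matrix

namespace Matrix

variable {ι R : Type*} [Fintype ι]

theorem one_dotProduct_mulVec_one_sub [Ring R] {Z : Matrix ι ι R} (hZ : Z *ᵥ 1 = 1)
    (s : ι → R) : (1 : ι → R) ⬝ᵥ (Z *ᵥ (1 - s)) = Fintype.card ι - 1 ⬝ᵥ (Z *ᵥ s) := by
  rw [mulVec_sub, dotProduct_sub, hZ, one_dotProduct_one]

variable [DecidableEq ι]

theorem sub_sub_one_mul_mulVec_of_mulVec_eq_self [Ring R] (X P : Matrix ι ι R) {v : ι → R}
    (hP : P *ᵥ v = v) : (X - (X - 1) * P) *ᵥ v = v := by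
  rw [sub_mulVec, ← mulVec_mulVec, hP, sub_mulVec, one_mulVec, sub_sub_cancel]

theorem inv_mulVec_eq_self_of_mulVec_eq_self [CommRing R] {Z : Matrix ι ι R} (hZ : IsUnit Z)
    {v : ι → R} (hv : Z *ᵥ v = v) : Z⁻¹ *ᵥ v = v :=
  letI := hZ.invertible
  inv_mulVec_eq_vec hv.symm

end Matrix

theorem maximization_reduces_to_minimization_general
    {n : ℕ} (P : Matrix (Fin n) (Fin n) ℝ) (hP : P *ᵥ (1 : Fin n → ℝ) = 1)
    (X : Matrix (Fin n) (Fin n) ℝ)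
    (hinv : IsUnit (X - (X - 1) * P)) :
    ∀ s : Fin n → ℝ,
      (1 : Fin n → ℝ) ⬝ᵥ ((X - (X - 1) * P)⁻¹ *ᵥ ((1 : Fin n → ℝ) - s)) =
        n - (1 : Fin n → ℝ) ⬝ᵥ ((X - (X - 1) * P)⁻¹ *ᵥ s) := by
  intro s
  have hZ : (X - (X - 1) * P)⁻¹ *ᵥ 1 = 1 :=
    inv_mulVec_eq_self_of_mulVec_eq_self hinv (sub_sub_one_mul_mulVec_of_mulVec_eq_self X P hP)
  simpa only [Fintype.card_fin] using one_dotProduct_mulVec_one_sub hZ s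

theorem maximization_reduces_to_minimization
    {n : ℕ} (P : Matrix (Fin n) (Fin n) ℝ) (hP : P *ᵥ (1 : Fin n → ℝ) = 1)
    (X : Matrix (Fin n) (Fin n) ℝ) (hX : X.IsDiag)
    (hinv : IsUnit (X - (X - 1) * P)) :
    ∀ s : Fin n → ℝ,
      (1 : Fin n → ℝ) ⬝ᵥ ((X - (X - 1) * P)⁻¹ *ᵥ ((1 : Fin n → ℝ) - s)) =
        n - (1 : Fin n → ℝ) ⬝ᵥ ((X - (X - 1) * P)⁻¹ *ᵥ s) :=
  maximization_reduces_to_minimization_general P hP X hinv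
end
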